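/- Fix s ∈ ℕ and let T be a forest with α_s(T) = k, where α_s(T) is the maximum size of a stable (independent) set among the vertices of T of degree at most s. Then for all n ≥ 2|V(T)| + 2k, there exists a graph G with at most n vertices, treewidth at most s, and at least (2k)^{-k}·n^k copies of T as subgraphs. -/

import Mathlib

open SimpleGraph

/-- The number of copies of `H` in `G`: subgraphs of `G` isomorphic to `H`. -/
noncomputable def numCopies {α β : Type*} (H : SimpleGraph α) (G : SimpleGraph β) : ℕ :=
  Nat.card {G' : G.Subgraph // Nonempty (G'.coe ≃g H)}

/-- `α_s(T)`: the maximum size of a stable set among the vertices of `T` of degree at most `s`. -/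
noncomputable def alphaDeg {V : Type*} (T : SimpleGraph V) (s : ℕ) : ℕ :=
  sSup {k | ∃ S : Finset V, S.card = k ∧ (∀ v ∈ S, (T.neighborSet v).ncard ≤ s) ∧
    ∀ u ∈ S, ∀ v ∈ S, ¬ T.Adj u v}

/-- `G` has a tree decomposition of width at most `w`. -/
def HasTreeDecompositionOfWidth {V : Type*} (G : SimpleGraph V) (w : ℕ) : Prop :=
  ∃ (ι : Type) (T : SimpleGraph ι) (bag : ι → Finset V),
    T.Connected ∧ T.IsAcyclic ∧
    (∀ v : V, ∃ i, v ∈ bag i) ∧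
    (∀ u v : V, G.Adj u v → ∃ i, u ∈ bag i ∧ v ∈ bag i) ∧
    (∀ v : V, (T.induce {i | v ∈ bag i}).Connected) ∧
    (∀ i, (bag i).card ≤ w + 1)

/-!
Let `S` be a maximum stable set of vertices of degree at most `s` in `T`, so `|S| = k`, and give
every vertex of `S` a set of `m = ⌈n / 2k⌉` false twins. Choosing one twin for each vertex of
`S` gives `m ^ k` different copies of `T`, and there are at most `|T| + k m ≤ n` vertices.

The treewidth stays at most `s`. Root every component of the forest `T` and let `par u` be the
parent of `u`. The vertex `u` gets the bag `{u, par u}` if `u ∉ S`, and the bag `N[u]` (at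
most `s + 1` vertices) if `u ∈ S`. Below the bag of `u ∈ S` hangs one bag `N(u) ∪ {x}` for
each twin `x` of `u`; since `S` is stable, twins are not adjacent to each other. An empty root
bag joins the components.
-/

lemma Function.LeftInverse.eq_of_range_eq {α β : Type*} {π : β → α} {σ₁ σ₂ : α → β}
    (h₁ : Function.LeftInverse π σ₁) (h₂ : Function.LeftInverse π σ₂)
    (h : Set.range σ₁ = Set.range σ₂) : σ₁ = σ₂ := by
  funext a
  obtain ⟨b, hb⟩ : σ₁ a ∈ Set.range σ₂ := h ▸ Set.mem_range_self a
  have hba : b = a := by simpa [h₁ a, h₂ b] using congrArg π hb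
  rw [← hb, hba]

namespace SimpleGraph

section ParentGraph

variable {ι : Type*} {P : ι → ι} {rank : ι → ℕ} {r : ι}

def parentGraph (P : ι → ι) : SimpleGraph ι := fromRel fun x y => P x = y

lemma parentGraph_adj {x y : ι} : (parentGraph P).Adj x y ↔ x ≠ y ∧ (P x = y ∨ P y = x) :=
  fromRel_adj ..

lemma parentGraph_reachable (hP : ∀ x, x ≠ r → rank (P x) < rank x) (x : ι) :
    (parentGraph P).Reachable x r := by
  by_cases hx : x = r
  · rw [hx]
  · have hPx : P x ≠ x := fun h => by simpa [h] using hP x hx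
    exact (parentGraph_adj.mpr ⟨hPx.symm, .inl rfl⟩).reachable.trans
      (parentGraph_reachable hP (P x))
termination_by rank x
decreasing_by exact hP x hx

lemma parentGraph_eq_of_adj_of_rank_le (hr : P r = r) (hP : ∀ x, x ≠ r → rank (P x) < rank x)
    {x y : ι} (hxy : (parentGraph P).Adj x y) (hle : rank y ≤ rank x) : P x = y := by
  obtain ⟨hne, h | h⟩ := parentGraph_adj.mp hxy
  · exact h
  · have hy : y ≠ r := by rintro rfl; exact hne (h.symm.trans hr)
    have := hP y hy
    rw [h] at this
    omega

lemma parentGraph_isAcyclic (hr : P r = r) (hP : ∀ x, x ≠ r → rank (P x) < rank x) :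
    (parentGraph P).IsAcyclic := by
  classical
  intro v c hc
  -- Both cycle-neighbours of a vertex of maximal rank on the cycle must be its parent.
  obtain ⟨w, hw, hmax⟩ := c.support.toFinset.exists_max_image rank ⟨v, by simp⟩
  rw [List.mem_toFinset] at hw
  set c' := c.rotate w hw
  have hc' : c'.IsCycle := hc.rotate hw
  have hbelow : ∀ y ∈ c'.support, rank y ≤ rank w := fun y hy =>
    hmax y (List.mem_toFinset.mpr ((c.mem_support_rotate_iff w hw).mp hy))
  apply hc'.snd_ne_penultimate
  rw [← parentGraph_eq_of_adj_of_rank_le hr hP (c'.adj_snd hc'.not_nil)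
      (hbelow _ (c'.getVert_mem_support 1)),
    ← parentGraph_eq_of_adj_of_rank_le hr hP (c'.adj_penultimate hc'.not_nil).symm
      (hbelow _ (c'.getVert_mem_support _))]

lemma parentGraph_isTree (hr : P r = r) (hP : ∀ x, x ≠ r → rank (P x) < rank x) :
    (parentGraph P).IsTree where
  connected := (connected_iff_exists_forall_reachable _).mpr
    ⟨r, fun x => (parentGraph_reachable hP x).symm⟩
  isAcyclic := parentGraph_isAcyclic hr hP

end ParentGraph

section RootedForest

variable {V : Type*} {T : SimpleGraph V}

lemma IsAcyclic.eq_penultimate_of_adj_of_dist_lt (hT : T.IsAcyclic) {r u w : V}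
    {p : T.Walk r u} (hp : p.IsPath) (huw : T.Adj u w) (hw : T.dist r w < T.dist r u) :
    w = p.penultimate := by
  classical
  obtain ⟨q, hq, hqlen⟩ := (p.reachable.trans huw.reachable).exists_path_of_dist
  have hu : u ∉ q.support := fun hu => by
    have := dist_le (q.takeUntil u hu)
    have := q.length_takeUntil_le_length hu
    omega
  exact hT.eq_penultimate_of_adj_end hp huw
    (hT.mem_support_of_ne_mem_support_of_adj_of_isPath hp hq huw hu)

lemma IsAcyclic.exists_parent (hT : T.IsAcyclic) :
    ∃ (par : V → V) (rank : V → ℕ),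
      (∀ u, par u ≠ u → T.Adj u (par u) ∧ rank (par u) < rank u) ∧
      ∀ u w, T.Adj u w → par u = w ∨ par w = u := by
  classical
  let root (u : V) : V := (T.connectedComponentMk u).out
  have root_reachable (u : V) : T.Reachable (root u) u :=
    ConnectedComponent.exact (T.connectedComponentMk u).out_eq
  have root_eq {u w : V} (h : T.Adj u w) : root u = root w := by
    simp only [root, ConnectedComponent.sound h.reachable]
  let rank (u : V) : ℕ := T.dist (root u) u
  let par (u : V) : V := if h : ∃ w, T.Adj u w ∧ rank w < rank u then h.choose else u
  have par_spec {u : V} (h : ∃ w, T.Adj u w ∧ rank w < rank u) :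
      T.Adj u (par u) ∧ rank (par u) < rank u := by
    simp only [par, dif_pos h]
    exact h.choose_spec
  have par_eq {u w : V} (huw : T.Adj u w) (hw : rank w < rank u) : par u = w := by
    obtain ⟨p, hp, -⟩ := (root_reachable u).exists_path_of_dist
    have hlower := par_spec ⟨w, huw, hw⟩
    simp only [rank, ← root_eq huw, ← root_eq hlower.1] at hw hlower
    rw [hT.eq_penultimate_of_adj_of_dist_lt hp huw hw,
      hT.eq_penultimate_of_adj_of_dist_lt hp hlower.1 hlower.2]
  refine ⟨par, rank, fun u hu => par_spec ?_, fun u w huw => ?_⟩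
  · by_contra h
    exact hu (dif_neg h)
  · have hreach := root_reachable u
    rcases hT.dist_eq_dist_add_one_of_adj_of_reachable (root u) huw hreach with h | h
    · left
      exact par_eq huw (by simp only [rank, ← root_eq huw]; omega)
    · right
      exact par_eq huw.symm (by simp only [rank, ← root_eq huw]; omega)

end RootedForest

lemma induce_connected_of_adj_or_adj_adj {ι : Type*} {Γ : SimpleGraph ι} {A : Set ι} {c : ι}
    (hc : c ∈ A)
    (h : ∀ x ∈ A, x = c ∨ Γ.Adj x c ∨ ∃ y ∈ A, Γ.Adj x y ∧ Γ.Adj y c) :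
    (Γ.induce A).Connected := by
  refine (connected_iff_exists_forall_reachable _).mpr
    ⟨⟨c, hc⟩, fun ⟨x, hx⟩ => Reachable.symm ?_⟩
  have hadj {y z : ι} (hy : y ∈ A) (hz : z ∈ A) (hyz : Γ.Adj y z) :
      (Γ.induce A).Reachable ⟨y, hy⟩ ⟨z, hz⟩ :=
    Adj.reachable (by simpa using hyz)
  obtain rfl | hxc | ⟨y, hy, hxy, hyc⟩ := h x hx
  · rfl
  · exact hadj hx hc hxc
  · exact (hadj hx hy hxy).trans (hadj hy hc hyc)

section Twins

variable {V X : Type*}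

def addTwins (T : SimpleGraph V) (g : X → V) : SimpleGraph (V ⊕ X) := T.comap (Sum.elim id g)

section addTwins

variable {T : SimpleGraph V} {g : X → V} {u w : V} {x y : X}

@[simp] lemma addTwins_adj_inl_inl : (T.addTwins g).Adj (.inl u) (.inl w) ↔ T.Adj u w := Iff.rfl
@[simp] lemma addTwins_adj_inl_inr : (T.addTwins g).Adj (.inl u) (.inr x) ↔ T.Adj u (g x) :=
  Iff.rfl
@[simp] lemma addTwins_adj_inr_inl : (T.addTwins g).Adj (.inr x) (.inl u) ↔ T.Adj (g x) u :=
  Iff.rfl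
@[simp] lemma addTwins_adj_inr_inr : (T.addTwins g).Adj (.inr x) (.inr y) ↔ T.Adj (g x) (g y) :=
  Iff.rfl

end addTwins

section TwinDecompParent

variable [DecidableEq V] {T : SimpleGraph V} (par : V → V) (rank : V → ℕ) (g : X → V)

-- Nodes of the decomposition tree: `none` is a common root, `some a` is the node of vertex `a`.
def twinDecompParent : Option (V ⊕ X) → Option (V ⊕ X)
  | none => none
  | some (.inl u) => if par u = u then none else some (.inl (par u))
  | some (.inr x) => some (.inl (g x))

def twinDecompRank : Option (V ⊕ X) → ℕ
  | none => 0
  | some (.inl u) => rank u + 1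
  | some (.inr x) => rank (g x) + 2

variable {par rank g}

lemma twinDecompRank_twinDecompParent_lt (hpar : ∀ u, par u ≠ u → rank (par u) < rank u) :
    ∀ i, i ≠ none → twinDecompRank rank g (twinDecompParent par g i) < twinDecompRank rank g i
  | none, h => absurd rfl h
  | some (.inl u), _ => by
    by_cases hu : par u = u
    · simp [twinDecompParent, twinDecompRank, hu]
    · simpa [twinDecompParent, twinDecompRank, hu] using hpar u hu
  | some (.inr x), _ => by simp [twinDecompParent, twinDecompRank]

lemma parentGraph_twinDecompParent_adj_inl (hedge : ∀ u w, T.Adj u w → par u = w ∨ par w = u)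
    {u w : V} (huw : T.Adj u w) :
    (parentGraph (twinDecompParent par g)).Adj (some (.inl u)) (some (.inl w)) := by
  refine parentGraph_adj.mpr ⟨by simpa using huw.ne, ?_⟩
  rcases hedge u w huw with h | h
  · left; simp [twinDecompParent, h, huw.ne.symm]
  · right; simp [twinDecompParent, h, huw.ne]

lemma parentGraph_twinDecompParent_adj_inr (x : X) :
    (parentGraph (twinDecompParent par g)).Adj (some (.inr x)) (some (.inl (g x))) :=
  parentGraph_adj.mpr ⟨by simp, .inl rfl⟩

end TwinDecompParent

section TwinDecompBag

variable [DecidableEq V] [DecidableEq X] (T : SimpleGraph V) [T.LocallyFinite] (S : Finset V)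
  (par : V → V) (g : X → V)

def twinDecompBag : Option (V ⊕ X) → Finset (V ⊕ X)
  | none => ∅
  | some (.inl u) =>
      if u ∈ S then insert (.inl u) ((T.neighborFinset u).map .inl) else {.inl u, .inl (par u)}
  | some (.inr x) => insert (.inr x) ((T.neighborFinset (g x)).map .inl)

variable {T S par g}

@[simp] lemma notMem_twinDecompBag_none (a : V ⊕ X) : a ∉ twinDecompBag T S par g none :=
  Finset.notMem_empty a

@[simp] lemma inl_mem_twinDecompBag_inl {u w : V} :
    .inl w ∈ twinDecompBag T S par g (some (.inl u)) ↔
      w = u ∨ (u ∈ S ∧ T.Adj u w) ∨ (u ∉ S ∧ w = par u) := by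
  by_cases hu : u ∈ S <;> simp [twinDecompBag, hu]

@[simp] lemma inr_notMem_twinDecompBag_inl {u : V} {x : X} :
    .inr x ∉ twinDecompBag T S par g (some (.inl u)) := by
  by_cases hu : u ∈ S <;> simp [twinDecompBag, hu]

@[simp] lemma inl_mem_twinDecompBag_inr {w : V} {x : X} :
    .inl w ∈ twinDecompBag T S par g (some (.inr x)) ↔ T.Adj (g x) w := by
  simp [twinDecompBag]

@[simp] lemma inr_mem_twinDecompBag_inr {x y : X} :
    .inr y ∈ twinDecompBag T S par g (some (.inr x)) ↔ y = x := by
  simp [twinDecompBag]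

lemma card_twinDecompBag_le {s : ℕ} (hs : 1 ≤ s) (hdeg : ∀ v ∈ S, T.degree v ≤ s)
    (hg : ∀ x, g x ∈ S) (i : Option (V ⊕ X)) :
    (twinDecompBag T S par g i).card ≤ s + 1 := by
  match i with
  | none => simp [twinDecompBag]
  | some (.inl u) =>
    by_cases hu : u ∈ S
    · simp only [twinDecompBag, if_pos hu]
      grw [Finset.card_insert_le, Finset.card_map, card_neighborFinset_eq_degree, hdeg u hu]
    · simp only [twinDecompBag, if_neg hu]
      grw [Finset.card_le_two]
      omega
  | some (.inr x) =>
    simp only [twinDecompBag]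
    grw [Finset.card_insert_le, Finset.card_map, card_neighborFinset_eq_degree, hdeg _ (hg x)]

lemma exists_mem_twinDecompBag_of_adj (hedge : ∀ u w, T.Adj u w → par u = w ∨ par w = u)
    (hS : T.IsIndepSet S) (hg : ∀ x, g x ∈ S) {a b : V ⊕ X} (hab : (T.addTwins g).Adj a b) :
    ∃ i, a ∈ twinDecompBag T S par g i ∧ b ∈ twinDecompBag T S par g i := by
  match a, b with
  | .inl u, .inl w =>
    rw [addTwins_adj_inl_inl] at hab
    by_cases hu : u ∈ S
    · exact ⟨some (.inl u), by simp, by simp [hu, hab]⟩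
    by_cases hw : w ∈ S
    · exact ⟨some (.inl w), by simp [hw, hab.symm], by simp⟩
    rcases hedge u w hab with h | h
    · exact ⟨some (.inl u), by simp, by simp [hu, h]⟩
    · exact ⟨some (.inl w), by simp [hw, h], by simp⟩
  | .inl u, .inr x => exact ⟨some (.inr x), by simpa using hab.symm, by simp⟩
  | .inr x, .inl u => exact ⟨some (.inr x), by simp, by simpa using hab⟩
  | .inr x, .inr y =>
    rw [addTwins_adj_inr_inr] at hab
    exact absurd hab (hS (hg x) (hg y) hab.ne)

lemma induce_twinDecompBag_connected (hpar : ∀ u, par u ≠ u → T.Adj u (par u))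
    (hedge : ∀ u w, T.Adj u w → par u = w ∨ par w = u) (hg : ∀ x, g x ∈ S) (a : V ⊕ X) :
    ((parentGraph (twinDecompParent par g)).induce
      {i | a ∈ twinDecompBag T S par g i}).Connected := by
  match a with
  | .inl u =>
    refine induce_connected_of_adj_or_adj_adj (c := some (.inl u)) (by simp) ?_
    rintro (_ | w | x) hi <;> simp only [Set.mem_ofPred_eq] at hi
    · simp at hi
    · obtain rfl | ⟨-, hwu⟩ | ⟨-, hu⟩ := inl_mem_twinDecompBag_inl.mp hi
      · exact .inl rfl
      · exact .inr (.inl (parentGraph_twinDecompParent_adj_inl hedge hwu))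
      · by_cases hwu : w = u
        · exact .inl (by rw [hwu])
        refine .inr (.inl (parentGraph_twinDecompParent_adj_inl hedge ?_))
        have := hpar w (by rw [← hu]; exact Ne.symm hwu)
        rwa [← hu] at this
    · rw [inl_mem_twinDecompBag_inr] at hi
      exact .inr (.inr ⟨some (.inl (g x)), by simp [hg x, hi],
        parentGraph_twinDecompParent_adj_inr x, parentGraph_twinDecompParent_adj_inl hedge hi⟩)
  | .inr x =>
    refine induce_connected_of_adj_or_adj_adj (c := some (.inr x)) (by simp) ?_
    rintro (_ | w | y) hi <;> simp only [Set.mem_ofPred_eq] at hi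
    · simp at hi
    · simp at hi
    · exact .inl (by rw [inr_mem_twinDecompBag_inr.mp hi])

end TwinDecompBag

end Twins

theorem IsAcyclic.hasTreeDecompositionOfWidth_addTwins {V X : Type} {T : SimpleGraph V}
    [T.LocallyFinite] {S : Finset V} {g : X → V} {s : ℕ} (hT : T.IsAcyclic)
    (hS : T.IsIndepSet S) (hdeg : ∀ v ∈ S, T.degree v ≤ s) (hg : ∀ x, g x ∈ S)
    (hs : 1 ≤ s) :
    HasTreeDecompositionOfWidth (T.addTwins g) s := by
  classical
  obtain ⟨par, rank, hpar, hedge⟩ := hT.exists_parent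
  have htree := parentGraph_isTree (r := none) (rank := twinDecompRank rank g) rfl
    (twinDecompRank_twinDecompParent_lt fun u hu => (hpar u hu).2)
  refine ⟨Option (V ⊕ X), parentGraph (twinDecompParent par g), twinDecompBag T S par g,
    htree.connected, htree.isAcyclic, ?_, fun a b => exists_mem_twinDecompBag_of_adj hedge hS hg,
    induce_twinDecompBag_connected (fun u hu => (hpar u hu).1) hedge hg,
    card_twinDecompBag_le hs hdeg hg⟩
  rintro (u | x)
  · exact ⟨some (.inl u), by simp⟩
  · exact ⟨some (.inr x), by simp⟩

lemma ncard_neighborSet_eq_degree {V : Type*} (T : SimpleGraph V) [T.LocallyFinite] (v : V) :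
    (T.neighborSet v).ncard = T.degree v :=
  Set.ncard_eq_toFinset_card' _

lemma exists_isIndepSet_card_eq_alphaDeg {V : Type*} [Finite V] (T : SimpleGraph V)
    [T.LocallyFinite] (s : ℕ) :
    ∃ S : Finset V, S.card = alphaDeg T s ∧ T.IsIndepSet S ∧
      ∀ v ∈ S, T.degree v ≤ s := by
  have hbdd : BddAbove {k | ∃ S : Finset V, S.card = k ∧
      (∀ v ∈ S, (T.neighborSet v).ncard ≤ s) ∧ ∀ u ∈ S, ∀ v ∈ S, ¬ T.Adj u v} := by
    refine ⟨Nat.card V, ?_⟩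
    rintro _ ⟨S, rfl, -, -⟩
    exact Set.ncard_coe_finset S ▸ Set.ncard_le_card _
  obtain ⟨S, hcard, hdeg, hS⟩ :=
    Nat.sSup_mem (by exact ⟨0, ∅, by simp, by simp, by simp⟩) hbdd
  exact ⟨S, hcard, fun u hu v hv _ => hS u hu v hv,
    fun v hv => T.ncard_neighborSet_eq_degree v ▸ hdeg v hv⟩

section Copies

variable {V W : Type*} {T : SimpleGraph V} {π : W → V} {σ : V → W}

def Copy.ofLeftInverse (h : Function.LeftInverse π σ) : T.Copy (T.comap π) :=
  ⟨⟨σ, fun {a b} hab => by simpa [h a, h b] using hab⟩, h.injective⟩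

lemma Copy.toSubgraph_ofLeftInverse_verts (h : Function.LeftInverse π σ) :
    (Copy.ofLeftInverse (T := T) h).toSubgraph.verts = Set.range σ := by
  simp [Copy.ofLeftInverse]

end Copies

lemma card_le_numCopies {α β ι : Type*} [Finite β] {H : SimpleGraph α} {G : SimpleGraph β}
    (c : ι → H.Copy G) (hc : Function.Injective fun i => (c i).toSubgraph) :
    Nat.card ι ≤ numCopies H G :=
  Nat.card_le_card_of_injective (fun i => ⟨(c i).toSubgraph, ⟨(c i).isoToSubgraph.symm⟩⟩)
    fun _ _ h => hc (congrArg Subtype.val h)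

lemma pow_card_le_numCopies_addTwins {V : Type*} [Finite V] (T : SimpleGraph V) (S : Finset V)
    (m : ℕ) :
    m ^ S.card ≤ numCopies T (T.addTwins fun p : S × Fin m => (p.1 : V)) := by
  classical
  let σ (f : S → Fin m) (v : V) : V ⊕ S × Fin m :=
    if h : v ∈ S then .inr (⟨v, h⟩, f ⟨v, h⟩) else .inl v
  have hσ (f : S → Fin m) :
      Function.LeftInverse (Sum.elim id fun p : S × Fin m => (p.1 : V)) (σ f) := fun v => by
    by_cases h : v ∈ S <;> simp [σ, h]
  have hinj : Function.Injective fun f => (Copy.ofLeftInverse (T := T) (hσ f)).toSubgraph := by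
    intro f₁ f₂ h
    have := (hσ f₁).eq_of_range_eq (hσ f₂) (by
      simpa only [Copy.toSubgraph_ofLeftInverse_verts] using congrArg Subgraph.verts h)
    funext x
    simpa [σ] using congrFun this x
  show _ ≤ numCopies T (T.comap _)
  simpa [Nat.card_fun] using card_le_numCopies _ hinj

end SimpleGraph

lemma exists_add_mul_le_and_pow_le {c k n : ℕ} (hn : 2 * c + 2 * k ≤ n) :
    ∃ m, c + k * m ≤ n ∧ n ^ k ≤ (2 * k) ^ k * m ^ k := by
  rcases Nat.eq_zero_or_pos k with rfl | hk
  · exact ⟨0, by omega, by simp⟩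
  -- `m = ⌈n / 2k⌉`
  obtain ⟨m, hm⟩ : ∃ m, m = (n + 2 * k - 1) / (2 * k) := ⟨_, rfl⟩
  have hdiv := Nat.div_add_mod (n + 2 * k - 1) (2 * k)
  rw [← hm] at hdiv
  have hmod := Nat.mod_lt (n + 2 * k - 1) (by omega : 0 < 2 * k)
  have hkm : 2 * k * m = 2 * (k * m) := by ring
  refine ⟨m, by omega, ?_⟩
  rw [← mul_pow]
  exact Nat.pow_le_pow_left (by omega) k

theorem stmt4 {VT : Type} [Fintype VT] (s : ℕ) (hs : 1 ≤ s)
    (T : SimpleGraph VT) (hT : T.IsAcyclic) (k : ℕ) (hk : alphaDeg T s = k) :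
    ∀ n : ℕ, 2 * Fintype.card VT + 2 * k ≤ n →
      ∃ (VG : Type) (_ : Finite VG) (G : SimpleGraph VG),
        Nat.card VG ≤ n ∧ HasTreeDecompositionOfWidth G s ∧
        n ^ k ≤ (2 * k) ^ k * numCopies T G := by
  classical
  intro n hn
  subst hk
  obtain ⟨S, hScard, hS, hdeg⟩ := exists_isIndepSet_card_eq_alphaDeg T s
  obtain ⟨m, hsize, hpow⟩ := exists_add_mul_le_and_pow_le hn
  refine ⟨VT ⊕ S × Fin m, inferInstance, T.addTwins fun p => (p.1 : VT), ?_,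
    hT.hasTreeDecompositionOfWidth_addTwins hS hdeg (fun p => p.1.2) hs, ?_⟩
  · simpa [hScard, mul_comm] using hsize
  · rw [← hScard] at hpow ⊢
    exact hpow.trans (Nat.mul_le_mul_left _ (pow_card_le_numCopies_addTwins T S m))
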